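/- arXiv:2110.11735 — 2 statements merged into one kernel-verified Lean document; each statement's English description precedes it below -/
import Mathlib

section
/- Let H be a reproducing kernel Hilbert space of operators from U to Y with kernel K, and suppose K is nonexpansive, i.e., ‖K(u,u) − K(u,v) − K(v,u) + K(v,v)‖^{1/2} ≤ ‖u − v‖_U for all u, v. Then every H ∈ H is Lipschitz continuous with constant ‖H‖_H; in particular, if ‖H‖_H ≤ 1 then H is nonexpansive. -/
open scoped RealInnerProductSpace

theorem rkhs_nonexpansive_kernel_gives_lipschitz_operators
    {U : Type*} [NormedAddCommGroup U] [InnerProductSpace ℝ U]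
    {Y : Type*} [NormedAddCommGroup Y] [InnerProductSpace ℝ Y] [CompleteSpace Y]
    {H : Type*} [NormedAddCommGroup H] [InnerProductSpace ℝ H] [CompleteSpace H]
    (ev : H → U → Y) (K : U → U → (Y →L[ℝ] Y)) (Kfun : U → Y → H)
    (hKmem : ∀ u y v, ev (Kfun u y) v = K v u y)
    (hrep : ∀ (h : H) (u : U) (y : Y), ⟪y, ev h u⟫ = ⟪h, Kfun u y⟫)
    (hnonexp : ∀ u v : U, Real.sqrt ‖K u u - K u v - K v u + K v v‖ ≤ ‖u - v‖) :
    ∀ h : H, (∀ u v : U, ‖ev h u - ev h v‖ ≤ ‖h‖ * ‖u - v‖) ∧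
      (‖h‖ ≤ 1 → ∀ u v : U, ‖ev h u - ev h v‖ ≤ ‖u - v‖) := by
  have main : ∀ (h : H) (u v : U), ‖ev h u - ev h v‖ ≤ ‖h‖ * ‖u - v‖ := by
    intro h u v
    set y := ev h u - ev h v with hy
    set Δ := Kfun u y - Kfun v y with hΔ
    -- inner products of Kfun's
    have hKK : ∀ a w : U, ⟪Kfun a y, Kfun w y⟫ = ⟪y, K w a y⟫ := by
      intro a w
      rw [← hrep, hKmem]
    -- ‖y‖^2 = ⟪h, Δ⟫
    have h1 : ‖y‖ ^ 2 = ⟪h, Δ⟫ := by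
      have : ‖y‖ ^ 2 = ⟪y, y⟫ := (real_inner_self_eq_norm_sq y).symm
      rw [this]
      rw [hy, inner_sub_right, hrep, hrep, hΔ, inner_sub_right]
    -- ‖Δ‖^2 = ⟪y, Kd y⟫
    have h2 : ‖Δ‖ ^ 2 = ⟪y, (K u u - K u v - K v u + K v v) y⟫ := by
      have : ‖Δ‖ ^ 2 = ⟪Δ, Δ⟫ := (real_inner_self_eq_norm_sq Δ).symm
      rw [this]
      rw [hΔ, inner_sub_right, inner_sub_left, inner_sub_left,
        hKK, hKK, hKK, hKK]
      simp only [ContinuousLinearMap.add_apply, ContinuousLinearMap.sub_apply,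
        inner_add_right, inner_sub_right]
      ring
    have hKd : ‖K u u - K u v - K v u + K v v‖ ≤ ‖u - v‖ ^ 2 := by
      have := hnonexp u v
      have hnn : (0:ℝ) ≤ ‖K u u - K u v - K v u + K v v‖ := norm_nonneg _
      calc ‖K u u - K u v - K v u + K v v‖
          = Real.sqrt ‖K u u - K u v - K v u + K v v‖ ^ 2 := by
            rw [Real.sq_sqrt hnn]
        _ ≤ ‖u - v‖ ^ 2 := by
            apply pow_le_pow_left₀ (Real.sqrt_nonneg _) this
    have h2' : ‖Δ‖ ^ 2 ≤ ‖u - v‖ ^ 2 * ‖y‖ ^ 2 := by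
      rw [h2]
      calc ⟪y, (K u u - K u v - K v u + K v v) y⟫
          ≤ ‖y‖ * ‖(K u u - K u v - K v u + K v v) y‖ := real_inner_le_norm _ _
        _ ≤ ‖y‖ * (‖K u u - K u v - K v u + K v v‖ * ‖y‖) := by
            gcongr
            exact (K u u - K u v - K v u + K v v).le_opNorm y
        _ ≤ ‖y‖ * (‖u - v‖ ^ 2 * ‖y‖) := by
            gcongr
        _ = ‖u - v‖ ^ 2 * ‖y‖ ^ 2 := by ring
    have hΔle : ‖Δ‖ ≤ ‖u - v‖ * ‖y‖ := by
      have hnn : (0:ℝ) ≤ ‖u - v‖ * ‖y‖ := by positivity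
      nlinarith [norm_nonneg Δ]
    have hy2 : ‖y‖ ^ 2 ≤ ‖h‖ * (‖u - v‖ * ‖y‖) := by
      rw [h1]
      calc ⟪h, Δ⟫ ≤ ‖h‖ * ‖Δ‖ := real_inner_le_norm _ _
        _ ≤ ‖h‖ * (‖u - v‖ * ‖y‖) := by gcongr
    rcases eq_or_lt_of_le (norm_nonneg y) with h0 | h0
    · rw [← h0]; positivity
    · have := hy2
      nlinarith
  intro h
  refine ⟨main h, fun hnorm u v => ?_⟩
  calc ‖ev h u - ev h v‖ ≤ ‖h‖ * ‖u - v‖ := main h u v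
    _ ≤ 1 * ‖u - v‖ := by gcongr
    _ = ‖u - v‖ := one_mul _
end

section
/- Let M be a nonsingular (m+p)×(m+p) real matrix with inverse N, partitioned conformably into blocks M₁₁ (m×m), M₁₂ (m×p), M₂₁ (p×m), M₂₂ (p×p) and similarly for N. Let R : U → Y be an operator (U, Y vector spaces of functions valued in ℝ^m, ℝ^p) such that M₁₁ + M₁₂R (acting pointwise/by composition) is invertible, and define S := (M₂₁ + M₂₂R)(M₁₁ + M₁₂R)⁻¹. Then N₁₁ + N₁₂S is invertible and R = (N₂₁ + N₂₂S)(N₁₁ + N₁₂S)⁻¹. -/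
/-- Scattering transformation: if `N` is the (blockwise) inverse of the nonsingular
block matrix `M`, `R : U → Y` is such that `M₁₁ + M₁₂ R` is invertible with inverse `g`,
and `S := (M₂₁ + M₂₂ R) ∘ (M₁₁ + M₁₂ R)⁻¹`, then `N₁₁ + N₁₂ S` is invertible and
`R = (N₂₁ + N₂₂ S) ∘ (N₁₁ + N₁₂ S)⁻¹`. -/
theorem scattering_inverse_representation
    {U Y : Type*} [AddCommGroup U] [Module ℝ U] [AddCommGroup Y] [Module ℝ Y]
    (M₁₁ : U →ₗ[ℝ] U) (M₁₂ : Y →ₗ[ℝ] U) (M₂₁ : U →ₗ[ℝ] Y) (M₂₂ : Y →ₗ[ℝ] Y)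
    (N₁₁ : U →ₗ[ℝ] U) (N₁₂ : Y →ₗ[ℝ] U) (N₂₁ : U →ₗ[ℝ] Y) (N₂₂ : Y →ₗ[ℝ] Y)
    -- N = M⁻¹ blockwise: N ∘ M = I
    (hNM₁₁ : ∀ (u : U) (y : Y), N₁₁ (M₁₁ u + M₁₂ y) + N₁₂ (M₂₁ u + M₂₂ y) = u)
    (hNM₂₁ : ∀ (u : U) (y : Y), N₂₁ (M₁₁ u + M₁₂ y) + N₂₂ (M₂₁ u + M₂₂ y) = y)
    -- and M ∘ N = I
    (hMN₁₁ : ∀ (u : U) (y : Y), M₁₁ (N₁₁ u + N₁₂ y) + M₁₂ (N₂₁ u + N₂₂ y) = u)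
    (hMN₂₁ : ∀ (u : U) (y : Y), M₂₁ (N₁₁ u + N₁₂ y) + M₂₂ (N₂₁ u + N₂₂ y) = y)
    (R : U → Y)
    (hbij : Function.Bijective (fun u : U => M₁₁ u + M₁₂ (R u)))
    (g : U → U) (hgl : Function.LeftInverse g (fun u : U => M₁₁ u + M₁₂ (R u)))
    (hgr : Function.RightInverse g (fun u : U => M₁₁ u + M₁₂ (R u)))
    (S : U → Y) (hS : ∀ v : U, S v = M₂₁ (g v) + M₂₂ (R (g v))) :
    Function.Bijective (fun v : U => N₁₁ v + N₁₂ (S v)) ∧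
    ∀ v : U, N₂₁ v + N₂₂ (S v) = R (N₁₁ v + N₁₂ (S v)) := by
  have key1 : ∀ v : U, N₁₁ v + N₁₂ (S v) = g v := by
    intro v
    have hv : M₁₁ (g v) + M₁₂ (R (g v)) = v := hgr v
    have h := hNM₁₁ (g v) (R (g v))
    rw [hv] at h
    rw [hS]
    exact h
  have key2 : ∀ v : U, N₂₁ v + N₂₂ (S v) = R (g v) := by
    intro v
    have hv : M₁₁ (g v) + M₁₂ (R (g v)) = v := hgr v
    have h := hNM₂₁ (g v) (R (g v))
    rw [hv] at h
    rw [hS]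
    exact h
  constructor
  · have : (fun v : U => N₁₁ v + N₁₂ (S v)) = g := funext key1
    rw [this]
    exact Function.bijective_iff_has_inverse.mpr ⟨_, hgr, hgl⟩
  · intro v
    rw [key1, key2]
end
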